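/- arXiv:2412.11571 — 2 statements merged into one kernel-verified Lean document; each statement's English description precedes it below -/
import Mathlib

section
/- Let Π = (V, Λ, C, dom, Bad) be a CSP whose dependency graph D := D_Π is locally finite, with maximum variable degree at most d+1 (i.e., |dom^{-1}(v)| ≤ d+1 for all v ∈ V). Let R ∈ ℕ and ε ∈ (0,1) be such that γ_D(R) < (1-ε)^{-R}, where γ_D is the growth function of D. If a table t : V → Λ^ℕ is (R, N, ε)-locally good for some N ∈ ℕ, then t is good, i.e., every f ∈ MTA(Π, t) is defined on all of V. -/
open MeasureTheory Set
open scoped ENNReal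

/-- A constraint satisfaction problem (CSP): variables `V`, labels `Λ`, constraints `C`.
`dom c` is the finite set of variables of the constraint `c`, and `Bad c` is the set of
bad labelings `φ : dom c → Λ`. -/
structure CSP (V : Type*) (Λ : Type*) (C : Type*) where
  dom : C → Set V
  dom_finite : ∀ c, (dom c).Finite
  Bad : (c : C) → Set (↥(dom c) → Λ)

namespace CSP

variable {V Λ C : Type*}

/-- A labeling `f : V → Λ` violates the constraint `c` if its restriction to `dom c`
is a bad labeling. -/
def violates (Φ : CSP V Λ C) (f : V → Λ) (c : C) : Prop :=
  (fun v : ↥(Φ.dom c) => f v) ∈ Φ.Bad c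

/-- A solution of a CSP: a labeling satisfying every constraint. -/
def IsSolution (Φ : CSP V Λ C) (f : V → Λ) : Prop := ∀ c, ¬ Φ.violates f c

/-- The dependency graph of a CSP: distinct constraints are adjacent iff their domains meet. -/
def depGraph (Φ : CSP V Λ C) : SimpleGraph C where
  Adj c c' := c ≠ c' ∧ (Φ.dom c ∩ Φ.dom c').Nonempty
  symm := by
    constructor
    intro c c' h
    exact ⟨h.1.symm, by rw [Set.inter_comm]; exact h.2⟩
  loopless := ⟨fun c h => h.1 rfl⟩

/-- `P[Bad(c)]`: the probability of the set of bad labelings of `c` with respect to the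
product measure `P^{dom c}`. -/
noncomputable def badProb [MeasurableSpace Λ] (Φ : CSP V Λ C) (P : Measure Λ) (c : C) : ℝ≥0∞ :=
  haveI := (Φ.dom_finite c).fintype
  Measure.pi (fun _ : ↥(Φ.dom c) => P) (Φ.Bad c)

end CSP

/-- The ball of radius `R` around `c`: vertices joined to `c` by a path of at most `R` edges. -/
def gball {C : Type*} (G : SimpleGraph C) (c : C) : ℕ → Set C
  | 0 => {c}
  | R + 1 => gball G c R ∪ ⋃ x ∈ gball G c R, G.neighborSet x

lemma gball_finite {C : Type*} (G : SimpleGraph C)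
    (hlf : ∀ v, (G.neighborSet v).Finite) (c : C) : ∀ R, (gball G c R).Finite
  | 0 => Set.finite_singleton c
  | (R + 1) => ((gball_finite G hlf c R).union
      ((gball_finite G hlf c R).biUnion (fun x _ => hlf x)))

/-- The growth function `γ_G(R) = sup_v |B_G(v,R)|`, valued in `ℕ∞`. -/
noncomputable def growth {C : Type*} (G : SimpleGraph C) (R : ℕ) : ℕ∞ :=
  ⨆ v, (gball G v R).encard

/-- The exponential growth rate `egr(G) = inf_{R ≥ 1} γ_G(R)^{1/R}`, valued in `ℝ≥0∞`. -/
noncomputable def egr {C : Type*} (G : SimpleGraph C) : ℝ≥0∞ :=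
  ⨅ R : {n : ℕ // 1 ≤ n}, ((growth G R.1 : ℝ≥0∞) ^ ((R.1 : ℝ)⁻¹))

/-- The closed neighborhood `N[c]` of a vertex in a graph. -/
def closedNbhd {C : Type*} (G : SimpleGraph C) (c : C) : Set C :=
  insert c (G.neighborSet c)

/-- A set of vertices is independent if no two of its members are adjacent. -/
def IsIndep {C : Type*} (G : SimpleGraph C) (s : Set C) : Prop :=
  ∀ c ∈ s, ∀ c' ∈ s, ¬ G.Adj c c'

section BorelCSP

variable {V Λ C : Type*}

/-- The finite set obtained as the image of a tuple. -/
noncomputable def finsetOfTuple {X : Type*} (n : ℕ) (t : Fin n → X) : Finset X :=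
  haveI := Classical.decEq X
  Finset.image t Finset.univ

/-- The standard Borel structure on the space of finite subsets of `X`: a set of finite sets is
measurable iff for each `n` its preimage under the map `(x_1, …, x_n) ↦ {x_1, …, x_n}` is
measurable. -/
noncomputable def finsetMS (X : Type*) [MeasurableSpace X] : MeasurableSpace (Finset X) :=
  ⨅ n : ℕ, MeasurableSpace.map (finsetOfTuple (X := X) n) MeasurableSpace.pi

/-- The graph of a labeling `φ : dom c → Λ`, as a finite subset of `V × Λ`; this encodes a finite
partial function `V ⇀ Λ`. -/
noncomputable def CSP.graphOf (Φ : CSP V Λ C) (c : C) (φ : ↥(Φ.dom c) → Λ) :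
    Finset (V × Λ) :=
  haveI := Classical.decEq (V × Λ)
  (Φ.dom_finite c).toFinset.attach.image
    (fun v => (v.1, φ ⟨v.1, (Φ.dom_finite c).mem_toFinset.mp v.2⟩))

/-- A CSP on standard Borel spaces is Borel if `dom` is a Borel map into the space of finite
subsets of `V` and `{(c, φ) : φ ∈ Bad c}` is Borel in `C × (finite partial functions V ⇀ Λ)`,
finite partial functions being encoded by their graphs. -/
structure IsBorelCSP [MeasurableSpace V] [MeasurableSpace Λ] [MeasurableSpace C]
    (Φ : CSP V Λ C) : Prop where
  dom_meas : Measurable[_, finsetMS V] (fun c => (Φ.dom_finite c).toFinset)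
  bad_meas : MeasurableSet[(inferInstance : MeasurableSpace C).prod (finsetMS (V × Λ))]
    {p : C × Finset (V × Λ) | ∃ φ ∈ Φ.Bad p.1, p.2 = Φ.graphOf p.1 φ}

end BorelCSP

section MT

variable {V Λ C : Type*}

open scoped Classical

/-- The level function of the Moser–Tardos algorithm run with the sequence `I` of chosen
independent sets: `lev_0(v) = 0` and `lev_{n+1}(v) = lev_n(v) + 1` exactly when `v` belongs to the
domain of some constraint in `I n`. -/
noncomputable def MTlev (Φ : CSP V Λ C) (I : ℕ → Set C) : ℕ → V → ℕ
  | 0, _ => 0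
  | n + 1, v => MTlev Φ I n v + (if ∃ c ∈ I n, v ∈ Φ.dom c then 1 else 0)

/-- The labeling used at step `n` of the Moser–Tardos algorithm with table `t`. -/
noncomputable def CSP.MTstep (Φ : CSP V Λ C) (t : V → ℕ → Λ) (I : ℕ → Set C)
    (n : ℕ) : V → Λ :=
  fun v => t v (MTlev Φ I n v)

/-- An MT-sequence `I` is consistent with `(Φ, t)` if it can be produced by the Moser–Tardos
algorithm on input `(Φ, t)`: each `I n` is an independent set of constraints violated by the
current labeling. -/
noncomputable def CSP.Consistent (Φ : CSP V Λ C) (t : V → ℕ → Λ) (I : ℕ → Set C) : Prop :=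
  (∀ n, IsIndep Φ.depGraph (I n)) ∧ ∀ n, ∀ c ∈ I n, Φ.violates (Φ.MTstep t I n) c

/-- An MT-sequence consistent with `(Φ, t)` that can be produced by the *maximal* Moser–Tardos
algorithm: each `I n` is a maximal independent subset of the set of violated constraints. -/
noncomputable def CSP.MaximalCons (Φ : CSP V Λ C) (t : V → ℕ → Λ) (I : ℕ → Set C) : Prop :=
  Φ.Consistent t I ∧
    ∀ n, ∀ c, Φ.violates (Φ.MTstep t I n) c → c ∉ I n → ∃ c' ∈ I n, Φ.depGraph.Adj c c'

/-- The levels at `v` stabilize, i.e. `lev(v) = lim_n lev_n(v) < ∞`: the output labeling of the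
run of the Moser–Tardos algorithm is defined at `v`. -/
def StabilizesAt (Φ : CSP V Λ C) (I : ℕ → Set C) (v : V) : Prop :=
  ∃ N, ∀ n, N ≤ n → MTlev Φ I n v = MTlev Φ I N v

/-- A table is good if every run of the Moser–Tardos algorithm on `(Φ, t)` produces a labeling
defined on all of `V`. -/
def CSP.GoodTable (Φ : CSP V Λ C) (t : V → ℕ → Λ) : Prop :=
  ∀ I : ℕ → Set C, Φ.Consistent t I → ∀ v, StabilizesAt Φ I v

/-- The `(c, r)`-local CSP `Π_{c,r}`: constraints at distance more than `r` from `c` in the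
dependency graph are always violated. -/
noncomputable def CSP.localCSP (Φ : CSP V Λ C) (c : C) (r : ℕ) : CSP V Λ C where
  dom := Φ.dom
  dom_finite := Φ.dom_finite
  Bad a := if a ∈ gball Φ.depGraph c r then Φ.Bad a else Set.univ

/-- A finite MT-sequence: `Σ_n |I_n| < ∞`. -/
def FiniteMTSeq {C : Type*} (I : ℕ → Set C) : Prop :=
  {q : C × ℕ | q.1 ∈ I q.2}.Finite

/-- A finite MT-sequence is `(c, r, N, ε)`-Følner if `Σ_n |I_n ∩ B_D(c,r)| ≥ N` and
`Σ_n |I_n \ B_D(c,r)| < ε · Σ_n |I_n|`. -/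
def CSP.Folner (Φ : CSP V Λ C) (I : ℕ → Set C) (c : C) (r N : ℕ) (ε : ℝ) : Prop :=
  FiniteMTSeq I ∧
    N ≤ {q : C × ℕ | q.1 ∈ I q.2 ∧ q.1 ∈ gball Φ.depGraph c r}.ncard ∧
    ({q : C × ℕ | q.1 ∈ I q.2 ∧ q.1 ∉ gball Φ.depGraph c r}.ncard : ℝ) <
      ε * ({q : C × ℕ | q.1 ∈ I q.2}.ncard : ℝ)

/-- A table is `(c, R, N, ε)`-locally good if for all `r < R` there is no `(c, r, N, ε)`-Følner
MT-sequence consistent with `(Φ_{c,r}, t)`. -/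
noncomputable def CSP.LocallyGoodAt (Φ : CSP V Λ C) (t : V → ℕ → Λ) (c : C) (R N : ℕ)
    (ε : ℝ) : Prop :=
  ∀ r < R, ¬ ∃ I : ℕ → Set C, (Φ.localCSP c r).Consistent t I ∧ Φ.Folner I c r N ε

/-- A table is `(R, N, ε)`-locally good if it is `(c, R, N, ε)`-locally good for every `c`. -/
noncomputable def CSP.LocallyGood (Φ : CSP V Λ C) (t : V → ℕ → Λ) (R N : ℕ) (ε : ℝ) : Prop :=
  ∀ c, Φ.LocallyGoodAt t c R N ε

/-- `dom_R(c) = ⋃_{a ∈ B_D(c,R)} dom(a)`. -/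
def CSP.domR (Φ : CSP V Λ C) (c : C) (R : ℕ) : Set V :=
  ⋃ a ∈ gball Φ.depGraph c R, Φ.dom a

lemma CSP.domR_finite (Φ : CSP V Λ C) (hlf : ∀ c, (Φ.depGraph.neighborSet c).Finite)
    (c : C) (R : ℕ) : (Φ.domR c R).Finite :=
  (gball_finite _ hlf c R).biUnion (fun a _ => Φ.dom_finite a)

/-- The set `LBad_{R,N,ε}(c)` of partial tables `φ : dom_R(c) → Λ^ℕ` such that some
(equivalently, every) table extending `φ` is not `(c, R, N, ε)`-locally good. -/
noncomputable def CSP.LBad (Φ : CSP V Λ C) (c : C) (R N : ℕ) (ε : ℝ) :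
    Set (↥(Φ.domR c R) → ℕ → Λ) :=
  {φ | ∃ t : V → ℕ → Λ, (∀ v : ↥(Φ.domR c R), t v = φ v) ∧
    ¬ Φ.LocallyGoodAt t c R N ε}

/-- The CSP `LG(R, N, ε)` whose solutions are exactly the `(R, N, ε)`-locally good tables. -/
noncomputable def CSP.LG (Φ : CSP V Λ C) (R N : ℕ) (ε : ℝ)
    (h : ∀ c, (Φ.domR c R).Finite) : CSP V (ℕ → Λ) C where
  dom c := Φ.domR c R
  dom_finite := h
  Bad c := Φ.LBad c R N ε

end MT

/-- `Q` is the product of copies of `P` over the index set `ι`: the measure of every measurable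
cylinder is the corresponding finite product. -/
def IsProductOf {ι Λ : Type*} [MeasurableSpace Λ] (Q : Measure (ι → Λ)) (P : Measure Λ) : Prop :=
  ∀ (s : Finset ι) (A : ι → Set Λ), (∀ i ∈ s, MeasurableSet (A i)) →
    Q {g | ∀ i ∈ s, g i ∈ A i} = ∏ i ∈ s, P (A i)

/-!
If the levels at `v` do not stabilize, then, as only finitely many constraints contain `v`, some
constraint is resampled infinitely often, hence more than `N` times within the first `m` steps.
Let `a` be a constraint resampled most often, `M` times, during these `m` steps, and let `T_r`
count the resamplings of constraints in the ball `B(a, r)`. Truncating the run to the first `m`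
steps and to `B(a, r + 1)` gives an MT-sequence consistent with the local CSP `Π_{a,r}`: every
constraint sharing a variable with one in `B(a, r)` lies in `B(a, r + 1)`, so the levels of the
variables of `B(a, r)` are unchanged. Local goodness says it is not Følner, i.e.
`T_r ≤ (1 - ε) T_{r+1}`. Iterating, `M = T_0 ≤ (1 - ε)^R T_R ≤ (1 - ε)^R |B(a, R)| M`, so
`γ(R) ≥ (1 - ε)^{-R}`.
-/

section GraphBall

variable {C : Type*} (G : SimpleGraph C) (c : C)

lemma mem_gball_self : ∀ r, c ∈ gball G c r
  | 0 => rfl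
  | r + 1 => Set.mem_union_left _ (mem_gball_self r)

lemma gball_subset_succ (r : ℕ) : gball G c r ⊆ gball G c (r + 1) :=
  Set.subset_union_left

lemma gball_mono : Monotone (gball G c) :=
  monotone_nat_of_le_succ (gball_subset_succ G c)

variable {G c} in
lemma mem_gball_succ_of_adj {x y : C} {r : ℕ} (hx : x ∈ gball G c r) (h : G.Adj x y) :
    y ∈ gball G c (r + 1) :=
  Set.mem_union_right _ (Set.mem_biUnion hx h)

lemma ncard_gball_le_growth (r : ℕ) : ((gball G c r).ncard : ℝ≥0∞) ≤ growth G r := by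
  have h : ((gball G c r).ncard : ℕ∞) ≤ growth G r :=
    (Set.ncard_le_encard _).trans (le_iSup (fun u => (gball G u r).encard) c)
  exact_mod_cast ENat.toENNReal_le.mpr h

end GraphBall

lemma le_pow_mul_of_le_mul_succ {x : ℕ → ℝ} {q : ℝ} (hq : 0 ≤ q) :
    ∀ R : ℕ, (∀ r < R, x r ≤ q * x (r + 1)) → x 0 ≤ q ^ R * x R
  | 0, _ => by simp
  | R + 1, h =>
    calc x 0 ≤ q ^ R * x R := le_pow_mul_of_le_mul_succ hq R fun r hr => h r (by omega)
      _ ≤ q ^ R * (q * x (R + 1)) :=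
          mul_le_mul_of_nonneg_left (h R R.lt_succ_self) (pow_nonneg hq R)
      _ = q ^ (R + 1) * x (R + 1) := by ring

section Resamplings

variable {C : Type*} (I : ℕ → Set C) (m : ℕ)

def truncate (s : Set C) : ℕ → Set C :=
  fun n => {c | n < m ∧ c ∈ I n ∧ c ∈ s}

def resamplings (s : Set C) : Set (C × ℕ) :=
  {q | q.2 < m ∧ q.1 ∈ I q.2 ∧ q.1 ∈ s}

variable {I m}

lemma resamplings_finite {s : Set C} (hs : s.Finite) : (resamplings I m s).Finite :=
  (hs.prod (Set.finite_Iio m)).subset fun _ hq => ⟨hq.2.2, hq.1⟩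

lemma resamplings_mono {s s' : Set C} (h : s ⊆ s') : resamplings I m s ⊆ resamplings I m s' :=
  fun _ hq => ⟨hq.1, hq.2.1, h hq.2.2⟩

lemma ncard_resamplings_singleton_le (c : C) : (resamplings I m {c}).ncard ≤ m := by
  calc (resamplings I m {c}).ncard ≤ (Set.Iio m).ncard :=
        Set.ncard_le_ncard_of_injOn Prod.snd (fun q hq => hq.1)
          (fun q hq q' hq' h => Prod.ext (hq.2.2.trans hq'.2.2.symm) h) (Set.finite_Iio m)
    _ = m := Set.ncard_Iio_nat m

lemma exists_le_ncard_resamplings_singleton {c : C} (h : {n | c ∈ I n}.Infinite) (K : ℕ) :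
    ∃ m, K ≤ (resamplings I m {c}).ncard := by
  obtain ⟨S, hSI, hSK⟩ := h.exists_subset_card_eq K
  refine ⟨S.sup id + 1, ?_⟩
  calc K = ((fun n => (c, n)) '' (S : Set ℕ)).ncard := by
        rw [Set.ncard_image_of_injective _ (Prod.mk_right_injective c), Set.ncard_coe_finset, hSK]
    _ ≤ (resamplings I (S.sup id + 1) {c}).ncard := by
        refine Set.ncard_le_ncard ?_ (resamplings_finite (Set.finite_singleton c))
        rintro _ ⟨n, hn, rfl⟩
        exact ⟨Nat.lt_succ_of_le (Finset.le_sup (f := id) hn), hSI hn, rfl⟩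

variable (I m) in
lemma exists_forall_ncard_resamplings_singleton_le [Nonempty C] :
    ∃ a, ∀ x, (resamplings I m {x}).ncard ≤ (resamplings I m {a}).ncard := by
  have hbdd : BddAbove (Set.range fun x : C => (resamplings I m {x}).ncard) :=
    ⟨m, by rintro _ ⟨x, rfl⟩; exact ncard_resamplings_singleton_le x⟩
  obtain ⟨a, ha⟩ := Nat.sSup_mem (Set.range_nonempty _) hbdd
  exact ⟨a, fun x => (le_csSup hbdd ⟨x, rfl⟩).trans ha.ge⟩

lemma ncard_resamplings_le_ncard_mul {s : Set C} (hs : s.Finite) {M : ℕ}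
    (hM : ∀ x ∈ s, (resamplings I m {x}).ncard ≤ M) :
    (resamplings I m s).ncard ≤ s.ncard * M := by
  have hcover : resamplings I m s = ⋃ x ∈ hs.toFinset, resamplings I m {x} := by
    ext q
    simp [resamplings]
  calc (resamplings I m s).ncard ≤ ∑ x ∈ hs.toFinset, (resamplings I m {x}).ncard := by
        rw [hcover]; exact Finset.set_ncard_biUnion_le _ _
    _ ≤ hs.toFinset.card * M :=
        Finset.sum_le_card_nsmul _ _ _ fun x hx => hM x (by simpa using hx)
    _ = s.ncard * M := by rw [Set.ncard_eq_toFinset_card s hs]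

end Resamplings

namespace CSP

variable {V Λ C : Type*} (Φ : CSP V Λ C)

lemma mem_gball_succ_of_mem_dom {a x c : C} {r : ℕ} {w : V} (hx : x ∈ gball Φ.depGraph a r)
    (hwx : w ∈ Φ.dom x) (hwc : w ∈ Φ.dom c) : c ∈ gball Φ.depGraph a (r + 1) := by
  by_cases h : x = c
  · exact h ▸ gball_subset_succ _ _ _ hx
  · exact mem_gball_succ_of_adj hx ⟨h, w, hwx, hwc⟩

lemma finite_setOf_mem_dom (hlf : ∀ c, (Φ.depGraph.neighborSet c).Finite) (v : V) :
    {c | v ∈ Φ.dom c}.Finite := by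
  rcases em (∃ c₁, v ∈ Φ.dom c₁) with ⟨c₁, h₁⟩ | h
  · exact (gball_finite _ hlf c₁ 1).subset fun c hc =>
      Φ.mem_gball_succ_of_mem_dom (mem_gball_self _ _ 0) h₁ hc
  · exact Set.finite_empty.subset fun c hc => h ⟨c, hc⟩

lemma violates_iff_of_eqOn {f g : V → Λ} {x : C} (h : Set.EqOn f g (Φ.dom x)) :
    Φ.violates f x ↔ Φ.violates g x := by
  unfold violates
  rw [show (fun v : ↥(Φ.dom x) => f v) = fun v : ↥(Φ.dom x) => g v from
    funext fun v => h v.2]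

lemma localCSP_violates_of_imp {a x : C} {r : ℕ} {f : V → Λ}
    (h : x ∈ gball Φ.depGraph a r → Φ.violates f x) : (Φ.localCSP a r).violates f x := by
  unfold violates localCSP
  dsimp only
  split_ifs with hx
  exacts [h hx, trivial]

lemma MTlev_localCSP (a : C) (r : ℕ) (I : ℕ → Set C) :
    MTlev (Φ.localCSP a r) I = MTlev Φ I := by
  funext n w
  induction n with
  | zero => rfl
  | succ n ih => simp only [MTlev, ih]; rfl

variable {Φ}

lemma stabilizesAt_of_finite {I : ℕ → Set C} {v : V}
    (h : {n | ∃ c ∈ I n, v ∈ Φ.dom c}.Finite) : StabilizesAt Φ I v := by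
  obtain ⟨b, hb⟩ := h.bddAbove
  refine ⟨b + 1, fun n hn => ?_⟩
  induction n, hn using Nat.le_induction with
  | base => rfl
  | succ n hn ih =>
    have hn' : ¬ ∃ c ∈ I n, v ∈ Φ.dom c := fun h => by have := hb h; omega
    simp [MTlev, hn', ih]

lemma exists_infinite_of_not_stabilizesAt (hlf : ∀ c, (Φ.depGraph.neighborSet c).Finite)
    {I : ℕ → Set C} {v : V} (hv : ¬ StabilizesAt Φ I v) :
    ∃ c, {n | c ∈ I n}.Infinite := by
  by_contra! h
  refine hv (stabilizesAt_of_finite (((Φ.finite_setOf_mem_dom hlf v).biUnion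
    fun c _ => h c).subset ?_))
  rintro n ⟨c, hc, hvc⟩
  exact Set.mem_biUnion hvc hc

lemma MTlev_truncate {I : ℕ → Set C} {m : ℕ} {s : Set C} {w : V}
    (hw : ∀ c, w ∈ Φ.dom c → c ∈ s) :
    ∀ n ≤ m, MTlev Φ (truncate I m s) n w = MTlev Φ I n w
  | 0, _ => rfl
  | n + 1, hn => by
    have hstep : (∃ c ∈ truncate I m s n, w ∈ Φ.dom c) ↔ ∃ c ∈ I n, w ∈ Φ.dom c :=
      ⟨fun ⟨c, hc, hwc⟩ => ⟨c, hc.2.1, hwc⟩,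
        fun ⟨c, hc, hwc⟩ => ⟨c, ⟨hn, hc, hw c hwc⟩, hwc⟩⟩
    simp only [MTlev, MTlev_truncate (m := m) hw n (by omega)]
    classical
    exact congrArg _ (if_congr hstep rfl rfl)

lemma Consistent.localCSP_truncate {t : V → ℕ → Λ} {I : ℕ → Set C}
    (hI : Φ.Consistent t I) (a : C) (r m : ℕ) :
    (Φ.localCSP a r).Consistent t (truncate I m (gball Φ.depGraph a (r + 1))) := by
  refine ⟨fun n c hc c' hc' => hI.1 n c hc.2.1 c' hc'.2.1, fun n x hx => ?_⟩
  refine Φ.localCSP_violates_of_imp fun hxr =>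
    (Φ.violates_iff_of_eqOn fun w hw => ?_).2 (hI.2 n x hx.2.1)
  simp only [MTstep, MTlev_localCSP,
    MTlev_truncate (fun c hc => Φ.mem_gball_succ_of_mem_dom hxr hw hc) n hx.1.le]

lemma LocallyGoodAt.ncard_resamplings_le {t : V → ℕ → Λ} {a : C} {R N : ℕ} {ε : ℝ}
    (ht : Φ.LocallyGoodAt t a R N ε) (hlf : ∀ c, (Φ.depGraph.neighborSet c).Finite)
    {I : ℕ → Set C} (hI : Φ.Consistent t I) {m r : ℕ} (hr : r < R)
    (hN : N ≤ (resamplings I m (gball Φ.depGraph a r)).ncard) :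
    ((resamplings I m (gball Φ.depGraph a r)).ncard : ℝ) ≤
      (1 - ε) * (resamplings I m (gball Φ.depGraph a (r + 1))).ncard := by
  set J := truncate I m (gball Φ.depGraph a (r + 1))
  have hsub := resamplings_mono (I := I) (m := m) (gball_subset_succ Φ.depGraph a r)
  have hfin := resamplings_finite (I := I) (m := m) (gball_finite _ hlf a (r + 1))
  have hall : {q : C × ℕ | q.1 ∈ J q.2} = resamplings I m (gball Φ.depGraph a (r + 1)) := rfl
  have hin : {q : C × ℕ | q.1 ∈ J q.2 ∧ q.1 ∈ gball Φ.depGraph a r} =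
      resamplings I m (gball Φ.depGraph a r) := by
    ext q
    exact ⟨fun ⟨⟨h1, h2, _⟩, h4⟩ => ⟨h1, h2, h4⟩, fun h => ⟨hsub h, h.2.2⟩⟩
  have hout : {q : C × ℕ | q.1 ∈ J q.2 ∧ q.1 ∉ gball Φ.depGraph a r} =
      resamplings I m (gball Φ.depGraph a (r + 1)) \ resamplings I m (gball Φ.depGraph a r) := by
    ext q
    exact ⟨fun ⟨h, h'⟩ => ⟨h, fun h'' => h' h''.2.2⟩,
      fun ⟨h, h'⟩ => ⟨h, fun h'' => h' ⟨h.1, h.2.1, h''⟩⟩⟩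
  by_contra! hlt
  refine ht r hr ⟨J, hI.localCSP_truncate a r m, hfin, hin ▸ hN, ?_⟩
  rw [hout, Set.cast_ncard_sdiff hsub hfin, hall]
  linarith

end CSP

theorem locally_good_implies_good_general
    {V Λ C : Type*} (Φ : CSP V Λ C)
    (hlf : ∀ c, (Φ.depGraph.neighborSet c).Finite)
    (R N : ℕ) (ε : ℝ) (hε1 : ε < 1)
    (hγ : (growth Φ.depGraph R : ℝ≥0∞) < ENNReal.ofReal ((1 - ε)⁻¹ ^ R))
    (t : V → ℕ → Λ) (ht : Φ.LocallyGood t R N ε) :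
    Φ.GoodTable t := by
  intro I hI v
  by_contra hv
  set D := Φ.depGraph
  obtain ⟨c₀, hc₀⟩ := Φ.exists_infinite_of_not_stabilizesAt hlf hv
  obtain ⟨m, hm⟩ := exists_le_ncard_resamplings_singleton hc₀ (N + 1)
  have : Nonempty C := ⟨c₀⟩
  obtain ⟨a, ha⟩ := exists_forall_ncard_resamplings_singleton_le I m
  set M := (resamplings I m {a}).ncard
  have hNM : N + 1 ≤ M := hm.trans (ha c₀)
  have hN : ∀ r, N ≤ (resamplings I m (gball D a r)).ncard := fun r =>
    (Nat.le_of_succ_le hNM).trans <| Set.ncard_le_ncard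
      (resamplings_mono (gball_mono D a (Nat.zero_le r)))
      (resamplings_finite (gball_finite D hlf a r))
  have hdecay : (M : ℝ) ≤ (1 - ε) ^ R * (resamplings I m (gball D a R)).ncard :=
    le_pow_mul_of_le_mul_succ (x := fun r => ((resamplings I m (gball D a r)).ncard : ℝ))
      (sub_nonneg.2 hε1.le) R fun r hr => (ht a).ncard_resamplings_le hlf hI hr (hN r)
  have hcount : ((resamplings I m (gball D a R)).ncard : ℝ) ≤ (gball D a R).ncard * M := by
    exact_mod_cast ncard_resamplings_le_ncard_mul (gball_finite D hlf a R) fun x _ => ha x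
  have hball : (1 - ε)⁻¹ ^ R ≤ ((gball D a R).ncard : ℝ) := by
    have hM : (0 : ℝ) < M := by exact_mod_cast (by omega : 0 < M)
    have hpow : (0 : ℝ) < (1 - ε) ^ R := pow_pos (by linarith) R
    rw [inv_pow, inv_le_iff_one_le_mul₀' hpow]
    nlinarith
  refine hγ.not_ge ((ENNReal.ofReal_le_ofReal hball).trans ?_)
  simpa using ncard_gball_le_growth D a R

/-- **Lemma.** Let `R ∈ ℕ` and `ε ∈ (0,1)` with `γ_D(R) < (1-ε)^{-R}`, where the maximum variable
degree of `Φ` is at most `d+1`. If a table `t` is `(R, N, ε)`-locally good for some `N`, then `t`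
is good. -/
theorem locally_good_implies_good
    {V Λ C : Type*} (Φ : CSP V Λ C) (d : ℕ)
    (hlf : ∀ c, (Φ.depGraph.neighborSet c).Finite)
    (hvdeg : ∀ v : V, {c : C | v ∈ Φ.dom c}.encard ≤ d + 1)
    (R N : ℕ) (ε : ℝ) (hε0 : 0 < ε) (hε1 : ε < 1)
    (hγ : (growth Φ.depGraph R : ℝ≥0∞) < ENNReal.ofReal ((1 - ε)⁻¹ ^ R))
    (t : V → ℕ → Λ) (ht : Φ.LocallyGood t R N ε) :
    Φ.GoodTable t :=
  locally_good_implies_good_general Φ hlf R N ε hε1 hγ t ht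
end

section
/- Let Π = (V, Λ, C, dom, Bad) be a CSP whose dependency graph D := D_Π is locally finite. Fix c ∈ C, R, N ∈ ℕ, and ε ∈ (0,1). A table t is (c, R, N, ε)-locally good if and only if for all r < R, no (c, R)-bounded (c, r, N, ε)-Følner MT-sequence is consistent with (Π_{c,r}, t). -/
open MeasureTheory Set
open scoped ENNReal

/-!
A constraint outside `B_D(c, r + 1)` shares no variable with a constraint in `B_D(c, r)`.
Deleting such constraints from an MT-sequence therefore leaves the levels, hence the current
labeling, unchanged on the domains of the constraints in `B_D(c, r)`, so the truncated sequence is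
still consistent with `Π_{c,r}` (where every constraint outside `B_D(c, r)` is violated anyway).
The truncation keeps the part inside `B_D(c, r)` and only shrinks the part outside it, and since
`ε ≤ 1` the Følner inequality survives.
-/

lemma gball_mono_s14 {C : Type*} (G : SimpleGraph C) (c : C) {m n : ℕ} (h : m ≤ n) :
    gball G c m ⊆ gball G c n := by
  induction h with
  | refl => exact subset_rfl
  | step _ ih => exact Subset.trans ih subset_union_left

namespace CSP

variable {V Λ C : Type*}

lemma mem_gball_succ_of_mem_dom_inter (Φ : CSP V Λ C) {c a a' : C} {r : ℕ} {v : V}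
    (ha : a ∈ gball Φ.depGraph c r) (hva : v ∈ Φ.dom a) (hva' : v ∈ Φ.dom a') :
    a' ∈ gball Φ.depGraph c (r + 1) := by
  by_cases h : a' = a
  · exact gball_mono_s14 _ c r.le_succ (h ▸ ha)
  · exact mem_union_right _ (mem_biUnion ha ⟨Ne.symm h, v, hva, hva'⟩)

lemma MTlev_congr (Φ : CSP V Λ C) {I J : ℕ → Set C} {v : V}
    (h : ∀ n, (∃ a ∈ I n, v ∈ Φ.dom a) ↔ (∃ a ∈ J n, v ∈ Φ.dom a)) :
    ∀ n, MTlev Φ I n v = MTlev Φ J n v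
  | 0 => rfl
  | n + 1 => by
    classical
    simp only [MTlev, MTlev_congr Φ h n]
    rw [if_congr (h n) rfl rfl]

lemma violates_localCSP_of_notMem (Φ : CSP V Λ C) {c a : C} {r : ℕ}
    (ha : a ∉ gball Φ.depGraph c r) (f : V → Λ) : (Φ.localCSP c r).violates f a := by
  simp only [violates, localCSP, if_neg ha]
  exact mem_univ _

lemma Consistent.inter_gball_succ {Φ : CSP V Λ C} {t : V → ℕ → Λ} {I : ℕ → Set C} {c : C}
    {r : ℕ} (hI : (Φ.localCSP c r).Consistent t I) :
    (Φ.localCSP c r).Consistent t (fun n => I n ∩ gball Φ.depGraph c (r + 1)) := by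
  refine ⟨fun n a ha a' ha' => hI.1 n a ha.1 a' ha'.1, fun n a ha => ?_⟩
  by_cases har : a ∈ gball Φ.depGraph c r
  · have hlev : ∀ v ∈ Φ.dom a, ∀ m,
        MTlev (Φ.localCSP c r) (fun n => I n ∩ gball Φ.depGraph c (r + 1)) m v =
        MTlev (Φ.localCSP c r) I m v := fun v hva => MTlev_congr _ fun m =>
      ⟨fun ⟨a', ha', hva'⟩ => ⟨a', ha'.1, hva'⟩,
        fun ⟨a', ha', hva'⟩ =>
          ⟨a', ⟨ha', Φ.mem_gball_succ_of_mem_dom_inter har hva hva'⟩, hva'⟩⟩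
    have hstep : (fun v : ↥(Φ.dom a) =>
        (Φ.localCSP c r).MTstep t (fun n => I n ∩ gball Φ.depGraph c (r + 1)) n v) =
        fun v : ↥(Φ.dom a) => (Φ.localCSP c r).MTstep t I n v :=
      funext fun v => congrArg (t v) (hlev v v.2 n)
    exact (congrArg (· ∈ (Φ.localCSP c r).Bad a) hstep).mpr (hI.2 n a ha.1)
  · exact Φ.violates_localCSP_of_notMem har _

lemma Folner.of_subset {Φ : CSP V Λ C} {I J : ℕ → Set C} {c : C} {r N : ℕ} {ε : ℝ}
    (hI : Φ.Folner I c r N ε) (hJI : ∀ n, J n ⊆ I n)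
    (hball : ∀ n, I n ∩ gball Φ.depGraph c r ⊆ J n) (hε : ε ≤ 1) :
    Φ.Folner J c r N ε := by
  set B := {q : C × ℕ | q.1 ∈ gball Φ.depGraph c r}
  have hPJI : {q : C × ℕ | q.1 ∈ J q.2} ⊆ {q : C × ℕ | q.1 ∈ I q.2} := fun q hq => hJI q.2 hq
  obtain ⟨hfinI, hN, hout⟩ := hI
  have hfinJ : FiniteMTSeq J := hfinI.subset hPJI
  have hin : {q : C × ℕ | q.1 ∈ J q.2} ∩ B = {q : C × ℕ | q.1 ∈ I q.2} ∩ B :=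
    Subset.antisymm (inter_subset_inter_left B hPJI) fun q hq => ⟨hball q.2 hq, hq.2⟩
  have hsplitI := ncard_inter_add_ncard_sdiff_eq_ncard {q : C × ℕ | q.1 ∈ I q.2} B hfinI
  have hsplitJ := ncard_inter_add_ncard_sdiff_eq_ncard {q : C × ℕ | q.1 ∈ J q.2} B hfinJ
  have hle : ({q : C × ℕ | q.1 ∈ J q.2} \ B).ncard ≤ ({q : C × ℕ | q.1 ∈ I q.2} \ B).ncard :=
    ncard_le_ncard (sdiff_subset_sdiff_left hPJI) hfinI.sdiff
  refine ⟨hfinJ, ?_, ?_⟩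
  · change N ≤ ({q : C × ℕ | q.1 ∈ J q.2} ∩ B).ncard
    rwa [hin]
  change (({q : C × ℕ | q.1 ∈ J q.2} \ B).ncard : ℝ) < ε * _
  change (({q : C × ℕ | q.1 ∈ I q.2} \ B).ncard : ℝ) < ε * _ at hout
  rw [← hsplitJ, hin]
  rw [← hsplitI] at hout
  push_cast at hout ⊢
  nlinarith [(Nat.cast_le (α := ℝ)).mpr hle]

end CSP

theorem locally_good_iff_bounded_general
    {V Λ C : Type*} (Φ : CSP V Λ C)
    (c : C) (R N : ℕ) (ε : ℝ) (hε1 : ε < 1) (t : V → ℕ → Λ) :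
    Φ.LocallyGoodAt t c R N ε ↔
      ∀ r < R, ¬ ∃ I : ℕ → Set C, (Φ.localCSP c r).Consistent t I ∧
        Φ.Folner I c r N ε ∧ (∀ n, I n ⊆ gball Φ.depGraph c R) := by
  refine ⟨fun h r hr ⟨I, hI, hF, _⟩ => h r hr ⟨I, hI, hF⟩, fun h r hr ⟨I, hI, hF⟩ => ?_⟩
  set J : ℕ → Set C := fun n => I n ∩ gball Φ.depGraph c (r + 1)
  have hF' : Φ.Folner J c r N ε :=
    hF.of_subset (fun _ => inter_subset_left)
      (fun _ _ ⟨haI, har⟩ => ⟨haI, gball_mono_s14 _ c r.le_succ har⟩) hε1.le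
  exact h r hr ⟨J, hI.inter_gball_succ, hF', fun _ => inter_subset_right.trans (gball_mono_s14 _ c hr)⟩

/-- **Lemma.** A table `t` is `(c, R, N, ε)`-locally good iff for all `r < R` no `(c, R)`-bounded
`(c, r, N, ε)`-Følner MT-sequence is consistent with `(Φ_{c,r}, t)`. -/
theorem locally_good_iff_bounded
    {V Λ C : Type*} (Φ : CSP V Λ C)
    (hlf : ∀ c, (Φ.depGraph.neighborSet c).Finite)
    (c : C) (R N : ℕ) (ε : ℝ) (hε0 : 0 < ε) (hε1 : ε < 1) (t : V → ℕ → Λ) :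
    Φ.LocallyGoodAt t c R N ε ↔
      ∀ r < R, ¬ ∃ I : ℕ → Set C, (Φ.localCSP c r).Consistent t I ∧
        Φ.Folner I c r N ε ∧ (∀ n, I n ⊆ gball Φ.depGraph c R) :=
  locally_good_iff_bounded_general Φ c R N ε hε1 t
end
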